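/- For every positive integer h, the fourth positive element of the greedy B_h-set is γ_4(h) = ⌊(h+3)/2⌋·h^2 + ⌊(3h+2)/2⌋. -/

import Mathlib

/-- A set `A` of nonnegative integers is a `B_h`-set if every solution to
`a_1 + ... + a_h = b_1 + ... + b_h` with all `a_i, b_i ∈ A` has
`{a_1, ..., a_h} = {b_1, ..., b_h}` as multisets. -/
def IsBhSet (h : ℕ) (A : Set ℕ) : Prop :=
  ∀ a b : Fin h → ℕ, (∀ i, a i ∈ A) → (∀ i, b i ∈ A) →
    (∑ i, a i) = (∑ i, b i) →
    Multiset.map a Finset.univ.val = Multiset.map b Finset.univ.val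

/-- Auxiliary construction of the greedy `B_h`-set: `greedyAux h k` is the pair
consisting of the `k`-th element `γ_k(h)` of the greedy `B_h`-set together with
the finite set `{γ_0(h), ..., γ_k(h)}`.  We have `γ_0(h) = 0`, `γ_1(h) = 1`, and
for `k ≥ 1`, `γ_{k+1}(h)` is the smallest integer greater than `γ_k(h)` such
that `{γ_0(h), ..., γ_k(h), γ_{k+1}(h)}` is a `B_h`-set. -/
noncomputable def greedyAux (h : ℕ) : ℕ → ℕ × Finset ℕ
  | 0 => (0, {0})
  | (k + 1) =>
    let p := greedyAux h k
    let g := if k = 0 then 1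
      else sInf {x : ℕ | p.1 < x ∧ IsBhSet h ((insert x p.2 : Finset ℕ) : Set ℕ)}
    (g, insert g p.2)

/-- `greedy h k` is the `k`-th element `γ_k(h)` of the greedy `B_h`-set. -/
noncomputable def greedy (h k : ℕ) : ℕ := (greedyAux h k).1

/-! With `h = m + k`, `m ≤ k ≤ m + 1`, put `p = h + 1`, `q = h p + 1` and `g = k q + m p + m + 1`.
A sum of at most `h` elements of `{1, p, q}` determines its mixed-radix digits, so `{0, 1, p, q}`
is a `B_h`-set. An element `x` with `x + s = s'`, where `s` is a sum of fewer than `h` and `s'` a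
sum of at most `h` elements of `{1, p, q}`, cannot be added to a `B_h`-set containing `0, 1, p, q`
(pad both sides with zeros). Every `x` strictly between `1, p, q, g` has this form, while `g` does
not; since moreover `2 g` exceeds every sum of `h` elements of `{1, p, q}`, adding `g` keeps the
`B_h` property. -/

theorem IsBhSet.mono {h : ℕ} {A B : Set ℕ} (hAB : A ⊆ B) (hB : IsBhSet h B) : IsBhSet h A :=
  fun a b ha hb hsum => hB a b (fun i => hAB (ha i)) (fun i => hAB (hb i)) hsum

theorem Multiset.exists_univ_map_eq {α : Type*} {n : ℕ} (s : Multiset α) (hs : card s = n) :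
    ∃ a : Fin n → α, Finset.univ.val.map a = s := by
  subst hs
  refine ⟨fun i => s.toList.get (i.cast (by simp)), ?_⟩
  rw [Fin.univ_val_map]
  conv_rhs => rw [← s.coe_toList]
  congr 1
  exact List.ext_getElem (by simp) fun i _ _ => by simp

theorem isBhSet_iff_multiset {h : ℕ} {A : Set ℕ} :
    IsBhSet h A ↔ ∀ s t : Multiset ℕ, Multiset.card s = h → Multiset.card t = h →
      (∀ x ∈ s, x ∈ A) → (∀ x ∈ t, x ∈ A) → s.sum = t.sum → s = t := by
  constructor
  · rintro hB s t hs ht hsA htA hst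
    obtain ⟨a, rfl⟩ := s.exists_univ_map_eq hs
    obtain ⟨b, rfl⟩ := t.exists_univ_map_eq ht
    exact hB a b (fun i => hsA _ (Multiset.mem_map_of_mem _ (Finset.mem_univ i)))
      (fun i => htA _ (Multiset.mem_map_of_mem _ (Finset.mem_univ i))) hst
  · intro hB a b ha hb hab
    refine hB _ _ (by simp) (by simp) ?_ ?_ hab
    all_goals simpa using ‹∀ i, _›

theorem not_isBhSet_of_add_sum_eq {h x : ℕ} {A : Set ℕ} (h0 : 0 ∈ A) (hxA : x ∈ A) (hx0 : x ≠ 0)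
    {u v : Multiset ℕ} (hu : ∀ y ∈ u, y ∈ A) (hv : ∀ y ∈ v, y ∈ A) (hxv : x ∉ v)
    (hcu : Multiset.card u < h) (hcv : Multiset.card v ≤ h) (huv : x + u.sum = v.sum) :
    ¬ IsBhSet h A := by
  intro hB
  have hpad := isBhSet_iff_multiset.1 hB (x ::ₘ u + Multiset.replicate (h - 1 - Multiset.card u) 0)
    (v + Multiset.replicate (h - Multiset.card v) 0) (by simp; omega) (by simp; omega)
    (fun y hy => by
      simp only [Multiset.mem_add, Multiset.mem_cons] at hy
      rcases hy with (rfl | hy) | hy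
      exacts [hxA, hu y hy, Multiset.eq_of_mem_replicate hy ▸ h0])
    (fun y hy => by
      rcases Multiset.mem_add.1 hy with hy | hy
      exacts [hv y hy, Multiset.eq_of_mem_replicate hy ▸ h0])
    (by simp [huv])
  have hx : x ∈ v + Multiset.replicate (h - Multiset.card v) 0 := by simp [← hpad]
  rcases Multiset.mem_add.1 hx with hx | hx
  exacts [hxv hx, hx0 (Multiset.eq_of_mem_replicate hx)]

/-- `x ∈ hA - (h - 1)A` for the iterated sumsets of `A = {0, 1, p, q}`. -/
def IsSumsetDiff (h p q x : ℕ) : Prop :=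
  ∃ b c d b' c' d' : ℕ, b + c + d < h ∧ b' + c' + d' ≤ h ∧
    x + (b + c * p + d * q) = b' + c' * p + d' * q

theorem IsSumsetDiff.not_isBhSet {h p q x : ℕ} {A : Set ℕ} (hx : IsSumsetDiff h p q x)
    (h0 : 0 ∈ A) (h1 : 1 ∈ A) (hp : p ∈ A) (hq : q ∈ A) (hxA : x ∈ A)
    (hx1 : 1 < x) (hxp : x ≠ p) (hxq : x ≠ q) : ¬ IsBhSet h A := by
  obtain ⟨b, c, d, b', c', d', hs, hs', hsum⟩ := hx
  have hmem : ∀ {b c d y : ℕ},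
      y ∈ Multiset.replicate b 1 + Multiset.replicate c p + Multiset.replicate d q →
        y = 1 ∨ y = p ∨ y = q := by
    intro b c d y hy
    simp only [Multiset.mem_add, Multiset.mem_replicate] at hy
    omega
  refine not_isBhSet_of_add_sum_eq (u := Multiset.replicate b 1 + Multiset.replicate c p +
      Multiset.replicate d q) (v := Multiset.replicate b' 1 + Multiset.replicate c' p +
      Multiset.replicate d' q) h0 hxA (by omega) ?_ ?_ ?_ (by simpa) (by simpa) (by simpa)
  · intro y hy
    rcases hmem hy with rfl | rfl | rfl <;> assumption
  · intro y hy
    rcases hmem hy with rfl | rfl | rfl <;> assumption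
  · intro hx
    rcases hmem hx with e | e | e <;> omega

theorem greedyAux_one (h : ℕ) : greedyAux h 1 = (1, {1, 0}) := by
  simp [greedyAux]

theorem greedyAux_add_two_eq {h k u v : ℕ} {S : Finset ℕ} (hk : greedyAux h (k + 1) = (u, S))
    (huv : u < v) (hv : IsBhSet h ↑(insert v S))
    (hmin : ∀ x, u < x → x < v → ¬ IsBhSet h ↑(insert x S)) :
    greedyAux h (k + 2) = (v, insert v S) := by
  have hInf : sInf {x | u < x ∧ IsBhSet h ↑(insert x S)} = v :=
    IsLeast.csInf_eq ⟨⟨huv, hv⟩, fun x hx => not_lt.1 fun hxv => hmin x hx.1 hxv hx.2⟩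
  rw [greedyAux, hk]
  simp [-Finset.coe_insert, hInf]

theorem isBhSet_of_injective {h p q g : ℕ} (h1p : 1 < p) (hpq : p < q) (hqg : q < g)
    (hinj : ∀ b c d e b' c' d' e' : ℕ, b + c + d + e ≤ h → b' + c' + d' + e' ≤ h →
      b + c * p + d * q + e * g = b' + c' * p + d' * q + e' * g →
      b = b' ∧ c = c' ∧ d = d' ∧ e = e') :
    IsBhSet h ↑({g, q, p, 1, 0} : Finset ℕ) := by
  set S : Finset ℕ := {g, q, p, 1, 0}
  have hsum : ∀ f : ℕ → ℕ, ∑ x ∈ S, f x = f g + f q + f p + f 1 + f 0 := by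
    intro f
    rw [Finset.sum_insert (by simp; omega), Finset.sum_insert (by simp; omega),
      Finset.sum_insert (by simp; omega), Finset.sum_pair (by omega)]
    ring
  have hcount : ∀ s : Multiset ℕ, (∀ x ∈ s, x ∈ (S : Set ℕ)) →
      Multiset.card s = s.count 1 + s.count p + s.count q + s.count g + s.count 0 ∧
      s.sum = s.count 1 + s.count p * p + s.count q * q + s.count g * g := by
    intro s hs
    constructor
    · rw [← Multiset.sum_count_eq_card hs, hsum]
      ring
    · rw [Finset.sum_multiset_count_of_subset s S (fun x hx => hs x (Multiset.mem_toFinset.1 hx)),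
        hsum]
      simp only [smul_eq_mul]
      ring
  rw [isBhSet_iff_multiset]
  intro s t hs ht hsS htS hst
  obtain ⟨hs_card, hs_sum⟩ := hcount s hsS
  obtain ⟨ht_card, ht_sum⟩ := hcount t htS
  obtain ⟨h1, hp, hq, hg⟩ := hinj _ _ _ _ _ _ _ _ (by omega) (by omega) (hs_sum ▸ ht_sum ▸ hst)
  refine Multiset.ext' fun y => ?_
  by_cases hy : y ∈ S
  · simp only [S, Finset.mem_insert, Finset.mem_singleton] at hy
    rcases hy with rfl | rfl | rfl | rfl | rfl <;> omega
  · rw [Multiset.count_eq_zero.2 fun h => hy (hsS y h),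
      Multiset.count_eq_zero.2 fun h => hy (htS y h)]

theorem Nat.eq_of_add_mul_eq_add_mul {p b c b' c' : ℕ} (hb : b < p) (hb' : b' < p)
    (h : b + c * p = b' + c' * p) : b = b' ∧ c = c' := by
  have hp : 0 < p := by omega
  constructor
  · simpa [Nat.add_mul_mod_self_right, Nat.mod_eq_of_lt hb, Nat.mod_eq_of_lt hb'] using
      congrArg (· % p) h
  · simpa [Nat.add_mul_div_right _ _ hp, Nat.div_eq_of_lt hb, Nat.div_eq_of_lt hb'] using
      congrArg (· / p) h

theorem Nat.add_mul_le_mul_of_add_le {n p b c : ℕ} (h : b + c ≤ n) (hp : 0 < p) :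
    b + c * p ≤ n * p := by
  nlinarith

theorem eq_of_add_mul_add_mul_eq {h p q b c d b' c' d' : ℕ} (hp : h < p) (hq : h * p < q)
    (hs : b + c + d ≤ h) (hs' : b' + c' + d' ≤ h)
    (heq : b + c * p + d * q = b' + c' * p + d' * q) : b = b' ∧ c = c' ∧ d = d' := by
  have hlt : ∀ {b c : ℕ}, b + c ≤ h → b + c * p < q := fun hbc =>
    (Nat.add_mul_le_mul_of_add_le hbc (by omega)).trans_lt hq
  obtain ⟨hlow, rfl⟩ := Nat.eq_of_add_mul_eq_add_mul (hlt (by omega)) (hlt (by omega)) heq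
  obtain ⟨rfl, rfl⟩ := Nat.eq_of_add_mul_eq_add_mul (by omega) (by omega) hlow
  exact ⟨rfl, rfl, rfl⟩

theorem not_isSumsetDiff_four {h m k p q g : ℕ} (hmk : m ≤ k) (hh : h = m + k) (hp : p = h + 1)
    (hq : q = h * p + 1) (hg : g = k * q + m * p + m + 1) : ¬ IsSumsetDiff h p q g := by
  rintro ⟨b, c, d, b', c', d', hs, hs', heq⟩
  -- Sizes force `d' - d ∈ {k, k + 1}`; in both cases the base-`p` digits of the two sides clash.
  have hL : b + (c + 1) * p ≤ h * p := Nat.add_mul_le_mul_of_add_le (by omega) (by omega)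
  have hR : b' + c' * p ≤ h * p := Nat.add_mul_le_mul_of_add_le (by omega) (by omega)
  obtain ⟨δ, rfl⟩ : ∃ δ, d' = d + δ := by
    refine ⟨d' - d, (Nat.add_sub_cancel' ?_).symm⟩
    by_contra! hd
    have : (d' + 1) * q ≤ d * q := Nat.mul_le_mul_right q hd
    nlinarith
  have e : g + (b + c * p) = b' + c' * p + δ * q := by linear_combination heq
  obtain hδ | rfl | rfl | hδ : δ < k ∨ δ = k ∨ δ = k + 1 ∨ k + 2 ≤ δ := by omega
  · have : (δ + 1) * q ≤ k * q := Nat.mul_le_mul_right q hδ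
    nlinarith
  · have : b' + c' * p ≤ m * p := Nat.add_mul_le_mul_of_add_le (by omega) (by omega)
    nlinarith
  · have e' : (m + b) + (m + c) * p = b' + (c' + h) * p := by linear_combination e - hg + hq
    rcases lt_or_ge (m + b) p with hb | hb
    · have := (Nat.eq_of_add_mul_eq_add_mul hb (by omega) e').1
      omega
    · obtain ⟨r, hr⟩ : ∃ r, m + b = p + r := ⟨m + b - p, by omega⟩
      have e'' : r + (m + c + 1) * p = b' + (c' + h) * p := by linear_combination e' - hr
      have := (Nat.eq_of_add_mul_eq_add_mul (by omega) (by omega) e'').2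
      omega
  · have : (k + 2) * q ≤ δ * q := Nat.mul_le_mul_right q hδ
    nlinarith

theorem eq_of_add_mul_add_mul_add_mul_eq {h m k p q g : ℕ} (hmk : m ≤ k) (hh : h = m + k)
    (hp : p = h + 1) (hq : q = h * p + 1) (hg : g = k * q + m * p + m + 1)
    {b c d e b' c' d' e' : ℕ} (hs : b + c + d + e ≤ h) (hs' : b' + c' + d' + e' ≤ h)
    (heq : b + c * p + d * q + e * g = b' + c' * p + d' * q + e' * g) :
    b = b' ∧ c = c' ∧ d = d' ∧ e = e' := by
  wlog he : e' ≤ e generalizing b c d e b' c' d' e'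
  · obtain ⟨h1, h2, h3, h4⟩ := this hs' hs heq.symm (by omega)
    exact ⟨h1.symm, h2.symm, h3.symm, h4.symm⟩
  obtain ⟨t, rfl⟩ := Nat.exists_eq_add_of_le he
  have heq' : b + c * p + d * q + t * g = b' + c' * p + d' * q := by linear_combination heq
  obtain rfl | rfl | ht : t = 0 ∨ t = 1 ∨ 2 ≤ t := by omega
  · rw [zero_mul, add_zero] at heq'
    obtain ⟨rfl, rfl, rfl⟩ := eq_of_add_mul_add_mul_eq (by omega : h < p) (by omega : h * p < q)
      (by omega) (by omega) heq'
    exact ⟨rfl, rfl, rfl, rfl⟩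
  · exact absurd ⟨b, c, d, b', c', d', by omega, by omega, by linear_combination heq'⟩
      (not_isSumsetDiff_four hmk hh hp hq hg)
  · have hbc : b' + c' * p ≤ (b' + c') * p := Nat.add_mul_le_mul_of_add_le le_rfl (by omega)
    have hpq : (b' + c') * p ≤ (b' + c') * q := Nat.mul_le_mul_left _ (by nlinarith)
    have hR : (b' + c' + d') * q ≤ h * q := Nat.mul_le_mul_right q (by omega)
    have hhq : h * q ≤ 2 * k * q := Nat.mul_le_mul_right q (by omega)
    have htg : 2 * g ≤ t * g := Nat.mul_le_mul_right g ht
    nlinarith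

theorem Nat.lt_or_eq_and_eq_zero_of_add_mul_le {n p b c : ℕ} (hp : 0 < p)
    (h : b + c * p ≤ n * p) : c < n ∨ c = n ∧ b = 0 := by
  obtain hlt | rfl | hgt := lt_trichotomy c n
  · exact .inl hlt
  · exact .inr ⟨rfl, by omega⟩
  · have : (n + 1) * p ≤ c * p := Nat.mul_le_mul_right p hgt
    nlinarith

theorem isSumsetDiff_of_lt_of_lt_three {h p x : ℕ} (hp : p = h + 1) (hpx : p < x)
    (hxq : x < h * p + 1) : IsSumsetDiff h p p x := by
  have h0 : 0 < h := Nat.pos_of_ne_zero fun h0 => by subst h0; omega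
  obtain ⟨b, c, rfl, hb⟩ : ∃ b c, x = b + c * p ∧ b < p :=
    ⟨x % p, x / p, (Nat.mod_add_div' x p).symm, Nat.mod_lt x (by omega)⟩
  have hc := Nat.lt_or_eq_and_eq_zero_of_add_mul_le (by omega) (Nat.le_of_lt_succ hxq)
  by_cases hbc : b + c ≤ h
  · exact ⟨0, 0, 0, b, c, 0, by omega, by omega, by ring⟩
  · obtain ⟨r, hr⟩ : ∃ r, p = b + r := ⟨p - b, by omega⟩
    exact ⟨r, 0, 0, 0, c + 1, 0, by omega, by omega, by linear_combination -hr⟩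

theorem isSumsetDiff_of_lt_of_lt_four {h m k p q g x : ℕ} (hm : 1 ≤ m) (hmk : m ≤ k)
    (hkm : k ≤ m + 1) (hh : h = m + k) (hp : p = h + 1) (hq : q = h * p + 1)
    (hg : g = k * q + m * p + m + 1) (hqx : q < x) (hxg : x < g) : IsSumsetDiff h p q x := by
  obtain ⟨r, D, rfl, hr⟩ : ∃ r D, x = r + D * q ∧ r < q :=
    ⟨x % q, x / q, (Nat.mod_add_div' x q).symm, Nat.mod_lt x (by omega)⟩
  obtain ⟨B, C, rfl, hB⟩ : ∃ B C, r = B + C * p ∧ B < p :=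
    ⟨r % p, r / p, (Nat.mod_add_div' r p).symm, Nat.mod_lt r (by omega)⟩
  have hC := Nat.lt_or_eq_and_eq_zero_of_add_mul_le (by omega) (show B + C * p ≤ h * p by omega)
  have hD : D ≠ 0 := by
    rintro rfl
    omega
  obtain ⟨C₀, hC₀⟩ : ∃ C₀, h = C + C₀ := ⟨h - C, by omega⟩
  -- In the first five cases fewer than `h` summands top `x = B + C p + D q` up to its own digit
  -- sum or to the next multiple of `p` or of `q`; in the last one `g ≤ x`.
  obtain hx | hx | hx | hx | hx | hx :
      D + C + B ≤ h ∨ (2 ≤ B ∧ D + C + 1 ≤ h) ∨ (D + 1 ≤ h ∧ B = 0 ∧ 2 ≤ C) ∨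
      (1 ≤ C ∧ 1 ≤ B ∧ D + B ≤ h) ∨ (D + 1 ≤ h ∧ 2 ≤ B ∧ h + 2 ≤ B + C) ∨
      (k + 1 ≤ D ∨ k ≤ D ∧ h ≤ D + C ∧ h + 1 ≤ D + B) := by
    omega
  · exact ⟨0, 0, 0, B, C, D, by omega, by omega, by ring⟩
  · obtain ⟨B₀, hB₀⟩ : ∃ B₀, p = B + B₀ := ⟨p - B, by omega⟩
    exact ⟨B₀, 0, 0, 0, C + 1, D, by omega, by omega, by linear_combination -hB₀⟩
  · obtain rfl : B = 0 := hx.2.1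
    refine ⟨1, C₀, 0, 0, 0, D + 1, by omega, by omega, ?_⟩
    linear_combination -hq - p * hC₀
  · obtain ⟨B₀, rfl⟩ : ∃ B₀, B = B₀ + 1 := ⟨B - 1, by omega⟩
    refine ⟨0, C₀, 0, B₀, 0, D + 1, by omega, by omega, ?_⟩
    linear_combination -hq - p * hC₀
  · obtain ⟨B₁, hB₁⟩ : ∃ B₁, h + 2 = B + B₁ := ⟨h + 2 - B, by omega⟩
    obtain ⟨C₁, hC₁⟩ : ∃ C₁, h = C + C₁ + 1 := ⟨h - C - 1, by omega⟩
    exact ⟨B₁, C₁, 0, 0, 0, D + 1, by omega, by omega, by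
      linear_combination -hB₁ - p * hC₁ - hq - hp⟩
  · rcases hx with hx | ⟨hx, hDC, hDB⟩
    · have : (k + 1) * q ≤ D * q := Nat.mul_le_mul_right q hx
      have : m ≤ k * p := by nlinarith
      nlinarith
    · obtain ⟨t, rfl⟩ := Nat.exists_eq_add_of_le hx
      have : m * p ≤ (C + t) * p := Nat.mul_le_mul_right p (by omega)
      have : t * (p + 1) ≤ t * q := Nat.mul_le_mul_left t (by nlinarith)
      nlinarith

theorem greedy_four_eq {h m k : ℕ} (hmk : m ≤ k) (hkm : k ≤ m + 1) (hh : h = m + k)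
    (hk : 0 < k) :
    greedy h 4 = k * (h * (h + 1) + 1) + m * (h + 1) + m + 1 := by
  set p := h + 1 with hp
  set q := h * p + 1 with hq
  set g := k * q + m * p + m + 1 with hg
  have h1p : 1 < p := by omega
  have hpq : p < q := by nlinarith
  have hqg : q < g := by nlinarith
  have hB : IsBhSet h ↑({g, q, p, 1, 0} : Finset ℕ) :=
    isBhSet_of_injective h1p hpq hqg fun _ _ _ _ _ _ _ _ hs hs' heq =>
      eq_of_add_mul_add_mul_add_mul_eq hmk hh hp hq hg hs hs' heq
  have e2 : greedyAux h 2 = (p, {p, 1, 0}) := by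
    refine greedyAux_add_two_eq (greedyAux_one h) h1p (hB.mono ?_) fun x h1x hxp => ?_
    · exact Finset.coe_subset.2 ((Finset.subset_insert _ _).trans (Finset.subset_insert _ _))
    · have hx : IsSumsetDiff h 1 1 x := ⟨0, 0, 0, x, 0, 0, by omega, by omega, by ring⟩
      exact hx.not_isBhSet (by simp) (by simp) (by simp) (by simp) (by simp) h1x (by omega)
        (by omega)
  have e3 : greedyAux h 3 = (q, {q, p, 1, 0}) := by
    refine greedyAux_add_two_eq e2 hpq (hB.mono ?_) fun x hpx hxq => ?_
    · exact Finset.coe_subset.2 (Finset.subset_insert _ _)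
    · exact (isSumsetDiff_of_lt_of_lt_three hp hpx hxq).not_isBhSet
        (by simp) (by simp) (by simp) (by simp) (by simp) (by omega) (by omega) (by omega)
  have e4 : greedyAux h 4 = (g, {g, q, p, 1, 0}) := by
    refine greedyAux_add_two_eq e3 hqg hB fun x hqx hxg => ?_
    obtain rfl | hm := Nat.eq_zero_or_pos m
    · obtain rfl : k = 1 := by omega
      omega
    · exact (isSumsetDiff_of_lt_of_lt_four hm hmk hkm hh hp hq hg hqx hxg).not_isBhSet
        (by simp) (by simp) (by simp) (by simp) (by simp) (by omega) (by omega) (by omega)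
  rw [greedy, e4]

theorem stmt_12 (h : ℕ) (hh : 1 ≤ h) :
    greedy h 4 = ((h + 3) / 2) * h ^ 2 + (3 * h + 2) / 2 := by
  obtain ⟨m, k, hmk, hkm, rfl, hk⟩ : ∃ m k, m ≤ k ∧ k ≤ m + 1 ∧ h = m + k ∧ 0 < k :=
    ⟨h / 2, h - h / 2, by omega, by omega, by omega, by omega⟩
  rw [greedy_four_eq hmk hkm rfl hk]
  obtain rfl | rfl : m = k ∨ k = m + 1 := by omega
  · rw [show (m + m + 3) / 2 = m + 1 by omega, show (3 * (m + m) + 2) / 2 = 3 * m + 1 by omega]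
    ring
  · rw [show (m + (m + 1) + 3) / 2 = m + 2 by omega,
      show (3 * (m + (m + 1)) + 2) / 2 = 3 * m + 2 by omega]
    ring
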